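/- arXiv:1709.05583 — 2 statements merged into one kernel-verified Lean document; each statement's English description precedes it below -/
import Mathlib

section
/- Let N_bb and N_sb be independent Binomial(n, 1-r) random variables, τ ∈ (0, 1/2), r ∈ (0,1). Then P(N_sb/(N_sb + N_bb) ≤ τ) ≤ exp(-2(1-2τ)²(1-r)²n / (τ² + (1-τ)²)), with the convention that the event includes outcomes with N_sb + N_bb = 0. -/
/-!
Since `τ ≥ 0`, the event `N_sb / (N_sb + N_bb) ≤ τ` is `(1 - τ) N_sb ≤ τ N_bb`, i.e.
`(1 - 2τ) n p ≤ τ (N_bb - n p) - (1 - τ) (N_sb - n p)` with `p = 1 - r`.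
By Hoeffding's lemma a centred `Bin(n, p)` variable is sub-Gaussian with variance proxy `n / 4`,
so by independence the right-hand side is sub-Gaussian with proxy `(τ² + (1 - τ)²) n / 4`, and the
Chernoff bound gives the claim.
-/

open MeasureTheory ProbabilityTheory
open scoped unitInterval NNReal

-- At `x = y = 0` the left side is `0 / 0 = 0 ≤ τ`, matching `0 ≤ 0` on the right.
lemma div_add_le_iff {x y τ : ℝ} (hx : 0 ≤ x) (hy : 0 ≤ y) (hτ : 0 ≤ τ) :
    x / (x + y) ≤ τ ↔ (1 - τ) * x ≤ τ * y := by
  rcases (add_nonneg hx hy).eq_or_lt with h | h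
  · obtain ⟨rfl, rfl⟩ : x = 0 ∧ y = 0 := ⟨by linarith, by linarith⟩
    simp [hτ]
  · rw [div_le_iff₀ h]
    constructor <;> intro <;> linarith

namespace ProbabilityTheory

lemma one_sub_add_mul_exp_le (p : I) (s : ℝ) :
    (1 - p) + p * Real.exp s ≤ Real.exp (p * s + s ^ 2 / 8) := by
  have hIcc : ∀ᵐ x ∂Ber((1 : ℝ), 0, p), x ∈ Set.Icc (0 : ℝ) 1 := by
    rw [ae_iff]
    exact bernoulliMeasure_apply_of_notMem_of_notMem p measurableSet_Icc.compl (by simp) (by simp)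
  have hoeffding := (hasSubgaussianMGF_of_mem_Icc aemeasurable_id hIcc).mgf_le s
  have hmgf : mgf (fun x ↦ id x - ∫ x, id x ∂Ber((1 : ℝ), 0, p)) Ber((1 : ℝ), 0, p) s
      = Real.exp (-(p * s)) * ((1 - p) + p * Real.exp s) := by
    simp only [mgf, integral_bernoulliMeasure, id, smul_eq_mul]
    rw [mul_add, ← mul_assoc, mul_comm _ (p : ℝ), mul_assoc, ← Real.exp_add]
    ring_nf
  have hproxy : ((‖(1 : ℝ) - 0‖₊ / 2) ^ 2 : ℝ≥0) * s ^ 2 / 2 = s ^ 2 / 8 := by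
    norm_num
    ring
  rwa [hmgf, hproxy, ← le_div_iff₀' (Real.exp_pos _), ← Real.exp_sub, sub_neg_eq_add,
    add_comm (s ^ 2 / 8)] at hoeffding

lemma mgf_binomial_sub (n : ℕ) (p : I) (t : ℝ) :
    mgf (fun k : ℕ ↦ (k : ℝ) - n * p) Bin(n, p) t
      = Real.exp (-(t * n * p)) * ((1 - p) + p * Real.exp t) ^ n := by
  rw [mgf, integral_binomial, add_comm, add_pow, Finset.mul_sum, Nat.range_succ_eq_Iic]
  refine Finset.sum_congr rfl fun k _ ↦ ?_
  rw [smul_eq_mul, mul_sub, Real.exp_sub, mul_pow, ← Real.exp_nat_mul, Real.exp_neg]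
  field_simp

lemma hasSubgaussianMGF_binomial (n : ℕ) (p : I) :
    HasSubgaussianMGF (fun k : ℕ ↦ (k : ℝ) - n * p) (n / 4) Bin(n, p) where
  integrable_exp_mul _ := integrable_binomial _
  mgf_le t := by
    have hp : (0 : ℝ) ≤ 1 - p := unitInterval.one_minus_nonneg p
    calc mgf (fun k : ℕ ↦ (k : ℝ) - n * p) Bin(n, p) t
        = Real.exp (-(t * n * p)) * ((1 - p) + p * Real.exp t) ^ n := mgf_binomial_sub n p t
      _ ≤ Real.exp (-(t * n * p)) * Real.exp (p * t + t ^ 2 / 8) ^ n := by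
        gcongr
        exacts [add_nonneg hp (mul_nonneg p.2.1 (Real.exp_pos t).le), one_sub_add_mul_exp_le p t]
      _ = Real.exp ((n / 4 : ℝ≥0) * t ^ 2 / 2) := by
        rw [← Real.exp_nat_mul, ← Real.exp_add]
        push_cast
        ring_nf

section

variable {Ω : Type*} [MeasurableSpace Ω] {μ : Measure Ω} {n : ℕ} {p : I}

lemma hasLaw_binomial_of_measure_eq {N : Ω → ℕ} (hN : Measurable N)
    (h : ∀ k, μ {ω | N ω = k} = ENNReal.ofReal (n.choose k * p ^ k * (1 - p) ^ (n - k))) :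
    HasLaw N Bin(n, p) μ where
  aemeasurable := hN.aemeasurable
  map_eq := Measure.ext_of_singleton fun k ↦ by
    rw [Measure.map_apply hN (measurableSet_singleton k), binomial_singleton]
    exact h k

lemma HasLaw.hasSubgaussianMGF_of_binomial {N : Ω → ℕ} (hN : HasLaw N Bin(n, p) μ) :
    HasSubgaussianMGF (fun ω ↦ (N ω : ℝ) - n * p) (n / 4) μ :=
  .of_map (X := fun k : ℕ ↦ (k : ℝ) - n * p) hN.aemeasurable
    (hN.map_eq ▸ hasSubgaussianMGF_binomial n p)

lemma measureReal_div_add_le_of_hasLaw_binomial {M N : Ω → ℕ} {τ : ℝ} (hτ₀ : 0 ≤ τ)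
    (hτ : τ ≤ 1 / 2) (hM : HasLaw M Bin(n, p) μ) (hN : HasLaw N Bin(n, p) μ)
    (hind : IndepFun N M μ) :
    μ.real {ω | (M ω : ℝ) / (M ω + N ω) ≤ τ} ≤
      Real.exp (-(2 * (1 - 2 * τ) ^ 2 * p ^ 2 * n) / (τ ^ 2 + (1 - τ) ^ 2)) := by
  have hsub : HasSubgaussianMGF (fun ω ↦ τ * (N ω - n * p) - (1 - τ) * (M ω - n * p))
      (.mk (τ ^ 2) (sq_nonneg τ) * (n / 4) + .mk ((1 - τ) ^ 2) (sq_nonneg _) * (n / 4)) μ :=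
    (hN.hasSubgaussianMGF_of_binomial.const_mul τ).sub_of_indepFun
      (hM.hasSubgaussianMGF_of_binomial.const_mul (1 - τ))
      (hind.comp (φ := fun k : ℕ ↦ τ * ((k : ℝ) - n * p))
        (ψ := fun k : ℕ ↦ (1 - τ) * ((k : ℝ) - n * p)) (by fun_prop) (by fun_prop))
  have hevent : {ω | (M ω : ℝ) / (M ω + N ω) ≤ τ} =
      {ω | (1 - 2 * τ) * n * p ≤ τ * (N ω - n * p) - (1 - τ) * (M ω - n * p)} := by
    ext ω
    simp only [Set.mem_ofPred_eq, div_add_le_iff (Nat.cast_nonneg _) (Nat.cast_nonneg _) hτ₀]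
    constructor <;> intro <;> linarith
  have hε : 0 ≤ (1 - 2 * τ) * n * p := by
    have hp : (0 : ℝ) ≤ p := p.2.1
    have hτ' : 0 ≤ 1 - 2 * τ := by linarith
    positivity
  rw [hevent]
  refine (hsub.measure_ge_le hε).trans_eq ?_
  congr 1
  push_cast
  rcases n.eq_zero_or_pos with rfl | hn
  · simp
  · field_simp
    ring

end

end ProbabilityTheory

theorem stmt_11_general {Ω : Type*} [MeasurableSpace Ω] (μ : Measure Ω)
    (n : ℕ) (r : ℝ) (τ : ℝ) (hτ : τ ∈ Set.Ioo (0:ℝ) (1/2)) (hr : r ∈ Set.Ioo (0:ℝ) 1)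
    (Nbb Nsb : Ω → ℕ) (hmbb : Measurable Nbb) (hmsb : Measurable Nsb)
    (hind : IndepFun Nbb Nsb μ)
    (hdbb : ∀ k, μ {ω | Nbb ω = k} =
      ENNReal.ofReal ((n.choose k : ℝ) * (1 - r) ^ k * r ^ (n - k)))
    (hdsb : ∀ k, μ {ω | Nsb ω = k} =
      ENNReal.ofReal ((n.choose k : ℝ) * (1 - r) ^ k * r ^ (n - k))) :
    (μ {ω | (Nsb ω : ℝ) / ((Nsb ω : ℝ) + (Nbb ω : ℝ)) ≤ τ}).toReal ≤
      Real.exp (-(2 * (1 - 2 * τ) ^ 2 * (1 - r) ^ 2 * n) / (τ ^ 2 + (1 - τ) ^ 2)) := by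
  obtain ⟨hτ₀, hτ₂⟩ := hτ
  obtain ⟨hr₀, hr₁⟩ := hr
  let p : I := ⟨1 - r, by linarith, by linarith⟩
  have hlaw {N : Ω → ℕ} (hN : Measurable N)
      (h : ∀ k, μ {ω | N ω = k} = ENNReal.ofReal (n.choose k * (1 - r) ^ k * r ^ (n - k))) :
      HasLaw N Bin(n, p) μ :=
    hasLaw_binomial_of_measure_eq hN fun k ↦ by
      rw [h k, show (p : ℝ) = 1 - r from rfl, sub_sub_cancel]
  exact measureReal_div_add_le_of_hasLaw_binomial hτ₀.le hτ₂.le (hlaw hmsb hdsb) (hlaw hmbb hdbb)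
    hind

theorem stmt_11 {Ω : Type*} [MeasurableSpace Ω] (μ : Measure Ω)
    [IsProbabilityMeasure μ] (n : ℕ) (r : ℝ) (τ : ℝ) (hτ : τ ∈ Set.Ioo (0:ℝ) (1/2)) (hr : r ∈ Set.Ioo (0:ℝ) 1)
    (Nbb Nsb : Ω → ℕ) (hmbb : Measurable Nbb) (hmsb : Measurable Nsb)
    (hind : IndepFun Nbb Nsb μ)
    (hdbb : ∀ k, μ {ω | Nbb ω = k} =
      ENNReal.ofReal ((n.choose k : ℝ) * (1 - r) ^ k * r ^ (n - k)))
    (hdsb : ∀ k, μ {ω | Nsb ω = k} =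
      ENNReal.ofReal ((n.choose k : ℝ) * (1 - r) ^ k * r ^ (n - k))) :
    (μ {ω | (Nsb ω : ℝ) / ((Nsb ω : ℝ) + (Nbb ω : ℝ)) ≤ τ}).toReal ≤
      Real.exp (-(2 * (1 - 2 * τ) ^ 2 * (1 - r) ^ 2 * n) / (τ ^ 2 + (1 - τ) ^ 2)) :=
  stmt_11_general μ n r τ hτ hr Nbb Nsb hmbb hmsb hind hdbb hdsb
end

section
/- Let N_bb and N_sb be independent Binomial(n, 1-r) random variables, τ ∈ (0, 1/2), r ∈ (0,1). Define α_s = (n - N_bb)/(2n - N_bb - N_sb). Then P(α_s ≤ τ) ≤ exp(-2(1-2τ)² r² n / (τ² + (1-τ)²)). -/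
open MeasureTheory ProbabilityTheory Real Finset
open scoped ENNReal

/-! With `X = n - N_bb` and `Y = n - N_sb` the numbers of Sybil nodes in the two samples,
`X / (X + Y) ≤ τ` forces `τ Y - (1 - τ) X ≥ 0`. Chernoff's bound with a parameter `t ≥ 0`,
independence and Hoeffding's lemma for each Bernoulli(`r`) summand bound the probability by
`exp (n (-(1 - 2τ) r t + (τ² + (1 - τ)²) t² / 8))`, and the optimal `t` gives the claim. -/

/-- Hoeffding's lemma for a Bernoulli(`p`) variable. -/
lemma one_sub_add_mul_exp_le {p : ℝ} (hp0 : 0 ≤ p) (hp1 : p ≤ 1) (t : ℝ) :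
    1 - p + p * exp t ≤ exp (p * t + t ^ 2 / 8) := by
  let μ : Measure Bool :=
    ENNReal.ofReal (1 - p) • Measure.dirac false + ENNReal.ofReal p • Measure.dirac true
  have : IsProbabilityMeasure μ := ⟨by simp [μ, ← ENNReal.ofReal_add (sub_nonneg.2 hp1) hp0]⟩
  have hint (f : Bool → ℝ) : ∫ b, f b ∂μ = p * f true + (1 - p) * f false := by
    simp [integral_fintype (Integrable.of_finite), μ, measureReal_def, hp0, sub_nonneg.2 hp1]
  let X : Bool → ℝ := fun b => if b then 1 else 0
  have hX : ∀ᵐ b ∂μ, X b ∈ Set.Icc (0:ℝ) 1 := ae_of_all _ fun b => by cases b <;> simp [X]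
  have hmgf := (hasSubgaussianMGF_of_mem_Icc (measurable_of_finite X).aemeasurable hX).mgf_le t
  simp only [mgf, hint, X] at hmgf
  norm_num at hmgf
  have h1 : exp (p * t) * exp (t * (1 - p)) = exp t := by rw [← exp_add]; ring_nf
  have h0 : exp (p * t) * exp (-(t * p)) = 1 := by rw [← exp_add]; ring_nf; exact exp_zero
  calc 1 - p + p * exp t = exp (p * t) * (p * exp (t * (1 - p)) + (1 - p) * exp (-(t * p))) := by
        linear_combination (-p) * h1 - (1 - p) * h0
    _ ≤ exp (p * t) * exp (t ^ 2 / 8) := by gcongr; exact hmgf.trans_eq (by ring_nf)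
    _ = exp (p * t + t ^ 2 / 8) := (exp_add _ _).symm

section

variable {Ω : Type*} [MeasurableSpace Ω] {μ : Measure Ω}

lemma lintegral_comp_eq_tsum {X : Ω → ℕ} (hX : Measurable X) (g : ℕ → ℝ≥0∞) :
    ∫⁻ ω, g (X ω) ∂μ = ∑' k, μ {ω | X ω = k} * g k := by
  rw [← lintegral_map (measurable_of_countable g) hX, lintegral_countable']
  congr with k
  rw [Measure.map_apply hX (measurableSet_singleton k), mul_comm]
  rfl

lemma ae_le_of_measure_eq_binomial {X : Ω → ℕ} {n : ℕ} {r : ℝ}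
    (hd : ∀ k, μ {ω | X ω = k} = ENNReal.ofReal ((n.choose k : ℝ) * (1 - r) ^ k * r ^ (n - k))) :
    ∀ᵐ ω ∂μ, X ω ≤ n := by
  rw [ae_iff]
  refine measure_mono_null (t := ⋃ k, {ω | X ω = n + 1 + k}) (fun ω hω => ?_)
    (measure_iUnion_null fun k => ?_)
  · exact Set.mem_iUnion.2 ⟨X ω - (n + 1), by simp only [Set.mem_ofPred_eq] at hω ⊢; omega⟩
  · rw [hd, Nat.choose_eq_zero_of_lt (by omega)]
    simp

lemma lintegral_exp_binomial {X : Ω → ℕ} (hX : Measurable X) {n : ℕ} {r : ℝ}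
    (hr0 : 0 ≤ r) (hr1 : r ≤ 1)
    (hd : ∀ k, μ {ω | X ω = k} = ENNReal.ofReal ((n.choose k : ℝ) * (1 - r) ^ k * r ^ (n - k)))
    (d : ℝ) :
    ∫⁻ ω, ENNReal.ofReal (exp (d * (n - X ω))) ∂μ = ENNReal.ofReal ((1 - r + r * exp d) ^ n) := by
  have hmass (k : ℕ) : 0 ≤ (n.choose k : ℝ) * (1 - r) ^ k * r ^ (n - k) := by
    have : 0 ≤ 1 - r := sub_nonneg.2 hr1
    positivity
  rw [lintegral_comp_eq_tsum hX (fun k => ENNReal.ofReal (exp (d * (n - k))))]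
  simp_rw [hd, ← ENNReal.ofReal_mul (hmass _)]
  rw [tsum_eq_sum (s := range (n + 1)) fun k hk => ?vanish,
    ← ENNReal.ofReal_sum_of_nonneg fun k _ => mul_nonneg (hmass k) (exp_nonneg _), add_pow]
  case vanish =>
    rw [Nat.choose_eq_zero_of_lt (by simpa using hk)]
    simp
  congr 1
  refine sum_congr rfl fun k hk => ?_
  rw [← Nat.cast_sub (Nat.lt_succ_iff.1 (mem_range.1 hk)), mul_comm d, exp_nat_mul, mul_pow]
  ring

lemma lintegral_exp_binomial_le {X : Ω → ℕ} (hX : Measurable X) {n : ℕ} {r : ℝ}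
    (hr0 : 0 ≤ r) (hr1 : r ≤ 1)
    (hd : ∀ k, μ {ω | X ω = k} = ENNReal.ofReal ((n.choose k : ℝ) * (1 - r) ^ k * r ^ (n - k)))
    (d : ℝ) :
    ∫⁻ ω, ENNReal.ofReal (exp (d * (n - X ω))) ∂μ ≤ ENNReal.ofReal (exp (n * (r * d + d ^ 2 / 8))) := by
  rw [lintegral_exp_binomial hX hr0 hr1 hd, exp_nat_mul]
  exact ENNReal.ofReal_le_ofReal
    (pow_le_pow_left₀ (by nlinarith [exp_pos d]) (one_sub_add_mul_exp_le hr0 hr1 d) n)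

lemma measure_le_lintegral_exp_mul_lintegral_exp {α β : Type*} [MeasurableSpace α]
    [MeasurableSpace β] {X : Ω → α} {Y : Ω → β} (hX : Measurable X) (hY : Measurable Y)
    (hXY : IndepFun X Y μ) {f : α → ℝ} {g : β → ℝ} (hf : Measurable f) (hg : Measurable g)
    {s : Set Ω} (hs : ∀ᵐ ω ∂μ, ω ∈ s → 0 ≤ f (X ω) + g (Y ω)) :
    μ s ≤ (∫⁻ ω, ENNReal.ofReal (exp (f (X ω))) ∂μ) * ∫⁻ ω, ENNReal.ofReal (exp (g (Y ω))) ∂μ := by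
  have hF : Measurable fun a => ENNReal.ofReal (exp (f a)) := by fun_prop
  have hG : Measurable fun b => ENNReal.ofReal (exp (g b)) := by fun_prop
  calc μ s
      ≤ μ {ω | 1 ≤ ENNReal.ofReal (exp (f (X ω))) * ENNReal.ofReal (exp (g (Y ω)))} := by
        refine measure_mono_ae (hs.mono fun ω h hω => ?_)
        change 1 ≤ _
        rw [← ENNReal.ofReal_mul (exp_nonneg _), ← exp_add]
        exact ENNReal.one_le_ofReal.2 (one_le_exp (h hω))
    _ ≤ ∫⁻ ω, ENNReal.ofReal (exp (f (X ω))) * ENNReal.ofReal (exp (g (Y ω))) ∂μ := by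
        simpa using mul_meas_ge_le_lintegral₀ ((hF.comp hX).mul (hG.comp hY)).aemeasurable 1
    _ = _ := lintegral_mul_eq_lintegral_mul_lintegral_of_indepFun (hF.comp hX) (hG.comp hY)
        (hXY.comp hF hG)

end

lemma one_sub_mul_le_mul_of_div_add_le {a b τ : ℝ} (ha : 0 ≤ a) (hb : 0 ≤ b)
    (h : a / (a + b) ≤ τ) : (1 - τ) * a ≤ τ * b := by
  rcases (add_nonneg ha hb).eq_or_lt with hab | hab
  · obtain rfl : a = 0 := by linarith
    obtain rfl : b = 0 := by linarith
    simp
  · rw [div_le_iff₀ hab] at h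
    linarith

theorem stmt_12_general {Ω : Type*} [MeasurableSpace Ω] (μ : Measure Ω)
    (n : ℕ) (r : ℝ) (τ : ℝ) (hτ : τ ∈ Set.Ioo (0:ℝ) (1/2)) (hr : r ∈ Set.Ioo (0:ℝ) 1)
    (Nbb Nsb : Ω → ℕ) (hmbb : Measurable Nbb) (hmsb : Measurable Nsb)
    (hind : IndepFun Nbb Nsb μ)
    (hdbb : ∀ k, μ {ω | Nbb ω = k} =
      ENNReal.ofReal ((n.choose k : ℝ) * (1 - r) ^ k * r ^ (n - k)))
    (hdsb : ∀ k, μ {ω | Nsb ω = k} =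
      ENNReal.ofReal ((n.choose k : ℝ) * (1 - r) ^ k * r ^ (n - k))) :
    (μ {ω | ((n : ℝ) - (Nbb ω : ℝ)) / (2 * (n : ℝ) - (Nbb ω : ℝ) - (Nsb ω : ℝ)) ≤ τ}).toReal ≤
      Real.exp (-(2 * (1 - 2 * τ) ^ 2 * r ^ 2 * n) / (τ ^ 2 + (1 - τ) ^ 2)) := by
  obtain ⟨-, hτ⟩ := hτ
  obtain ⟨hr0, hr1⟩ := hr
  have hs : 0 < τ ^ 2 + (1 - τ) ^ 2 := by nlinarith
  -- the minimiser of the Chernoff exponent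
  set t := 4 * (1 - 2 * τ) * r / (τ ^ 2 + (1 - τ) ^ 2) with ht_def
  have ht : 0 ≤ t := div_nonneg (by nlinarith) hs.le
  have hevent : ∀ᵐ ω ∂μ,
      ω ∈ {ω | ((n : ℝ) - (Nbb ω : ℝ)) / (2 * (n : ℝ) - (Nbb ω : ℝ) - (Nsb ω : ℝ)) ≤ τ} →
      0 ≤ -(t * (1 - τ)) * (n - Nbb ω) + t * τ * (n - Nsb ω) := by
    filter_upwards [ae_le_of_measure_eq_binomial hdbb, ae_le_of_measure_eq_binomial hdsb]
      with ω hbb hsb hω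
    have := one_sub_mul_le_mul_of_div_add_le (sub_nonneg.2 (Nat.cast_le.2 hbb))
      (sub_nonneg.2 (Nat.cast_le.2 hsb)) (le_of_eq_of_le (by ring_nf) hω)
    nlinarith
  refine ENNReal.toReal_le_of_le_ofReal (exp_nonneg _)
    ((measure_le_lintegral_exp_mul_lintegral_exp hmbb hmsb hind
      (f := fun j : ℕ => -(t * (1 - τ)) * (n - j)) (g := fun k : ℕ => t * τ * (n - k))
      (measurable_of_countable _) (measurable_of_countable _) hevent).trans ?_)
  calc _ ≤ ENNReal.ofReal (exp (n * (r * -(t * (1 - τ)) + (-(t * (1 - τ))) ^ 2 / 8))) *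
        ENNReal.ofReal (exp (n * (r * (t * τ) + (t * τ) ^ 2 / 8))) := by
        gcongr
        exacts [lintegral_exp_binomial_le hmbb hr0.le hr1.le hdbb _,
          lintegral_exp_binomial_le hmsb hr0.le hr1.le hdsb _]
    _ = _ := by
        rw [← ENNReal.ofReal_mul (exp_nonneg _), ← exp_add]
        congr 2
        rw [ht_def]
        field_simp
        ring

theorem stmt_12 {Ω : Type*} [MeasurableSpace Ω] (μ : Measure Ω)
    [IsProbabilityMeasure μ] (n : ℕ) (r : ℝ) (τ : ℝ) (hτ : τ ∈ Set.Ioo (0:ℝ) (1/2)) (hr : r ∈ Set.Ioo (0:ℝ) 1)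
    (Nbb Nsb : Ω → ℕ) (hmbb : Measurable Nbb) (hmsb : Measurable Nsb)
    (hind : IndepFun Nbb Nsb μ)
    (hdbb : ∀ k, μ {ω | Nbb ω = k} =
      ENNReal.ofReal ((n.choose k : ℝ) * (1 - r) ^ k * r ^ (n - k)))
    (hdsb : ∀ k, μ {ω | Nsb ω = k} =
      ENNReal.ofReal ((n.choose k : ℝ) * (1 - r) ^ k * r ^ (n - k))) :
    (μ {ω | ((n : ℝ) - (Nbb ω : ℝ)) / (2 * (n : ℝ) - (Nbb ω : ℝ) - (Nsb ω : ℝ)) ≤ τ}).toReal ≤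
      Real.exp (-(2 * (1 - 2 * τ) ^ 2 * r ^ 2 * n) / (τ ^ 2 + (1 - τ) ^ 2)) :=
  stmt_12_general μ n r τ hτ hr Nbb Nsb hmbb hmsb hind hdbb hdsb
end
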